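/- arXiv:1603.08140 — 4 statements merged into one kernel-verified Lean document; each statement's English description precedes it below -/
import Mathlib

section
/- If g is a holomorphic function on the open unit disk D ⊂ ℂ satisfying 0 < |g(z)| ≤ 1 for all z ∈ D, then |g'(0)| ≤ 2 |g(0)| log(1/|g(0)|). -/
/-!
Since `g` has no zeros on the simply connected disc, `g = exp h` for a holomorphic `h`, and
`Re (-h) = log (1 / ‖g‖) ≥ 0`. Conjugating the Schwarz lemma by the Möbius map
`w ↦ (w - b) / (w + conj b)` of the right half-plane onto the disc, with `b = f c`, shows
`‖f' c‖ ≤ 2 Re (f c) / R` for every `f` holomorphic on `ball c R` with positive real part; by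
shifting `f` by small positive constants this persists for nonnegative real part. Applied to
`f = -h`, whose derivative is `-g' / g`, this is `‖g' 0‖ ≤ 2 ‖g 0‖ log (1 / ‖g 0‖)`.
-/

open Complex Metric Set ComplexConjugate

namespace Complex

theorem norm_sub_lt_norm_add_conj {a b : ℂ} (ha : 0 < a.re) (hb : 0 < b.re) :
    ‖a - b‖ < ‖a + conj b‖ := by
  rw [norm_def, norm_def]
  apply Real.sqrt_lt_sqrt (normSq_nonneg _)
  simp only [normSq_apply, sub_re, sub_im, add_re, add_im, conj_re, conj_im]
  nlinarith

theorem exists_hasDerivAt_log_of_differentiableOn_ball {g : ℂ → ℂ} {c : ℂ} {R : ℝ}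
    (hg : DifferentiableOn ℂ g (ball c R)) (hne : ∀ z ∈ ball c R, g z ≠ 0) :
    ∃ h : ℂ → ℂ, (∀ z ∈ ball c R, HasDerivAt h (deriv g z / g z) z) ∧
      ∀ z ∈ ball c R, exp (h z) = g z := by
  rcases (ball c R).eq_empty_or_nonempty with hempty | ⟨c', hc'⟩
  · exact ⟨0, by simp [hempty], by simp [hempty]⟩
  have hlogderiv : DifferentiableOn ℂ (fun z ↦ deriv g z / g z) (ball c R) :=
    ((hg.analyticOnNhd isOpen_ball).deriv.differentiableOn).div hg hne
  obtain ⟨h, hc, hh⟩ := hlogderiv.isExactOn_ball.with_val_at c' (log (g c'))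
  have hgh : ∀ z ∈ ball c R, HasDerivAt (fun w ↦ g w * exp (-h w)) 0 z := by
    intro z hz
    have hgz := (hg.differentiableAt (isOpen_ball.mem_nhds hz)).hasDerivAt
    have hprod : HasDerivAt (fun w ↦ g w * exp (-h w))
        (deriv g z * exp (-h z) + g z * (exp (-h z) * -(deriv g z / g z))) z :=
      hgz.mul (hh z hz).neg.cexp
    convert hprod using 1
    field_simp [hne z hz]
    ring
  have hconst : ∀ z ∈ ball c R, g z * exp (-h z) = g c' * exp (-h c') := fun z hz ↦
    isOpen_ball.is_const_of_deriv_eq_zero (convex_ball c R).isPreconnected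
      (fun w hw ↦ (hgh w hw).differentiableAt.differentiableWithinAt)
      (fun w hw ↦ (hgh w hw).deriv) hz hc'
  refine ⟨h, hh, fun z hz ↦ ?_⟩
  have := hconst z hz
  rw [hc, exp_neg, exp_neg, exp_log (hne c' hc'), mul_inv_cancel₀ (hne c' hc'),
    mul_inv_eq_one₀ (exp_ne_zero _)] at this
  exact this.symm

noncomputable def halfPlaneToDisc (b w : ℂ) : ℂ := (w - b) / (w + conj b)

theorem halfPlaneToDisc_self (b : ℂ) : halfPlaneToDisc b b = 0 := by
  simp [halfPlaneToDisc]

theorem add_conj_ne_zero {b w : ℂ} (hb : 0 < b.re) (hw : 0 < w.re) : w + conj b ≠ 0 := by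
  intro h
  have := congrArg re h
  simp only [add_re, conj_re, zero_re] at this
  linarith

theorem norm_halfPlaneToDisc_lt_one {b w : ℂ} (hb : 0 < b.re) (hw : 0 < w.re) :
    ‖halfPlaneToDisc b w‖ < 1 := by
  rw [halfPlaneToDisc, norm_div, div_lt_one (norm_pos_iff.2 (add_conj_ne_zero hb hw))]
  exact norm_sub_lt_norm_add_conj hw hb

theorem differentiableOn_halfPlaneToDisc {b : ℂ} (hb : 0 < b.re) :
    DifferentiableOn ℂ (halfPlaneToDisc b) {w | 0 < w.re} :=
  ((differentiableOn_id.sub_const b).div (differentiableOn_id.add_const _))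
    fun _ hw ↦ add_conj_ne_zero hb hw

theorem hasDerivAt_halfPlaneToDisc_self {b : ℂ} (hb : 0 < b.re) :
    HasDerivAt (halfPlaneToDisc b) (1 / (2 * b.re : ℝ)) b := by
  have hden : b + conj b ≠ 0 := add_conj_ne_zero hb hb
  have hquot : HasDerivAt (halfPlaneToDisc b)
      ((1 * (b + conj b) - (b - b) * 1) / (b + conj b) ^ 2) b :=
    ((hasDerivAt_id b).sub_const b).div ((hasDerivAt_id b).add_const (conj b)) hden
  convert hquot using 1
  rw [← add_conj]
  field_simp
  ring

theorem norm_deriv_le_of_forall_re_pos {f : ℂ → ℂ} {c : ℂ} {R : ℝ}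
    (hf : DifferentiableOn ℂ f (ball c R)) (hR : 0 < R) (hre : ∀ z ∈ ball c R, 0 < (f z).re) :
    ‖deriv f c‖ ≤ 2 * (f c).re / R := by
  set b := f c
  have hb : 0 < b.re := hre c (mem_ball_self hR)
  have hdiff : DifferentiableOn ℂ (halfPlaneToDisc b ∘ f) (ball c R) :=
    (differentiableOn_halfPlaneToDisc hb).comp hf hre
  have hmaps : MapsTo (halfPlaneToDisc b ∘ f) (ball c R)
      (closedBall ((halfPlaneToDisc b ∘ f) c) 1) := fun z hz ↦ by
    simpa [halfPlaneToDisc_self, b] using (norm_halfPlaneToDisc_lt_one hb (hre z hz)).le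
  have hschwarz := norm_deriv_le_div_of_mapsTo_ball hdiff hmaps hR
  have hderiv : deriv (halfPlaneToDisc b ∘ f) c = 1 / (2 * b.re : ℝ) * deriv f c :=
    ((hasDerivAt_halfPlaneToDisc_self hb).comp c
      (hf.differentiableAt (isOpen_ball.mem_nhds (mem_ball_self hR))).hasDerivAt).deriv
  have h2b : 0 < 2 * b.re := by positivity
  rw [hderiv, norm_mul, norm_div, norm_one, norm_real, Real.norm_of_nonneg h2b.le,
    div_mul_eq_mul_div, one_mul, div_le_div_iff₀ h2b hR] at hschwarz
  rw [le_div_iff₀ hR]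
  linarith

theorem norm_deriv_le_of_forall_re_nonneg {f : ℂ → ℂ} {c : ℂ} {R : ℝ}
    (hf : DifferentiableOn ℂ f (ball c R)) (hR : 0 < R) (hre : ∀ z ∈ ball c R, 0 ≤ (f z).re) :
    ‖deriv f c‖ ≤ 2 * (f c).re / R := by
  refine le_of_forall_pos_le_add fun ε hε ↦ ?_
  have hδ : 0 < ε * R / 2 := by positivity
  have hshift := norm_deriv_le_of_forall_re_pos (f := fun z ↦ f z + (ε * R / 2 : ℝ))
    (hf.add_const _) hR fun z hz ↦ by simpa using add_pos_of_nonneg_of_pos (hre z hz) hδ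
  rw [deriv_add_const] at hshift
  calc ‖deriv f c‖ ≤ 2 * (f c + (ε * R / 2 : ℝ)).re / R := hshift
    _ = 2 * (f c).re / R + ε := by
      rw [add_re, ofReal_re]
      field_simp

end Complex

theorem schwarz_pick_nonvanishing_at_zero (g : ℂ → ℂ)
    (hg : DifferentiableOn ℂ g (ball (0 : ℂ) 1))
    (hpos : ∀ z ∈ ball (0 : ℂ) 1, 0 < ‖g z‖)
    (hle : ∀ z ∈ ball (0 : ℂ) 1, ‖g z‖ ≤ 1) :
    ‖deriv g 0‖ ≤ 2 * ‖g 0‖ * Real.log (1 / ‖g 0‖) := by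
  have h0 : (0 : ℂ) ∈ ball (0 : ℂ) 1 := mem_ball_self one_pos
  obtain ⟨h, hh, hexp⟩ :=
    exists_hasDerivAt_log_of_differentiableOn_ball hg fun z hz ↦ norm_pos_iff.1 (hpos z hz)
  have hre : ∀ z ∈ ball (0 : ℂ) 1, (-h z).re = Real.log (1 / ‖g z‖) := fun z hz ↦ by
    rw [one_div, Real.log_inv, ← hexp z hz, norm_exp, Real.log_exp, neg_re]
  have hbound := norm_deriv_le_of_forall_re_nonneg (f := fun z ↦ -h z)
    (fun z hz ↦ (hh z hz).neg.differentiableAt.differentiableWithinAt) one_pos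
    fun z hz ↦ hre z hz ▸ Real.log_nonneg (one_le_one_div (hpos z hz) (hle z hz))
  have hderiv : deriv (fun z ↦ -h z) 0 = -(deriv g 0 / g 0) := (hh 0 h0).neg.deriv
  rw [hderiv, norm_neg, norm_div, hre 0 h0, div_one,
    div_le_iff₀ (hpos 0 h0)] at hbound
  linarith
end

section
/- Let f be holomorphic on the open unit disk D, z ∈ D with f nowhere zero on B_z = {w : |w - z| < d_z/2}, where d_z = 1 - |z|, and let M_f(z) = sup{|f(w)| : w ∈ B_z}. Then (d_z/2)|f'(z)| ≤ 2 |f(z)| log(M_f(z)/|f(z)|). -/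
/-!
On the disc `B_z` the zero-free `f` has a holomorphic logarithm `h`, with `h' = f' / f` and
`Re h = log ‖f‖ ≤ log M_f(z)`. For a holomorphic `u` with `Re u ≤ L` on `ball c r`, the Schwarz
transform `v / (2 (L - Re u c) - v)` of `v = u - u c` maps the disc into the closed unit disc and
sends `c` to `0`, so Schwarz's lemma gives `‖u' c‖ ≤ 2 (L - Re u c) / r`. Taking `u = h` and
`L = log M_f(z)` yields the estimate.
-/

open Set Metric

namespace Complex

theorem exists_log_of_ne_zero_on_ball {f : ℂ → ℂ} {c : ℂ} {r : ℝ}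
    (hf : DifferentiableOn ℂ f (ball c r)) (hf₀ : ∀ w ∈ ball c r, f w ≠ 0) :
    ∃ h : ℂ → ℂ, ∀ w ∈ ball c r, HasDerivAt h (deriv f w / f w) w ∧ exp (h w) = f w := by
  have hf' : DifferentiableOn ℂ (deriv f) (ball c r) :=
    (hf.analyticOnNhd isOpen_ball).deriv.differentiableOn
  obtain ⟨g, hg⟩ := (hf'.div hf hf₀).isExactOn_ball
  have hfd : ∀ w ∈ ball c r, HasDerivAt f (deriv f w) w := fun w hw ↦
    (hf.differentiableAt (isOpen_ball.mem_nhds hw)).hasDerivAt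
  have hprod : ∀ w ∈ ball c r,
      HasDerivAt (fun w ↦ f w * exp (-g w)) 0 w := by
    intro w hw
    refine ((hfd w hw).fun_mul (hg w hw).fun_neg.cexp).congr_deriv ?_
    rw [Pi.div_apply]
    field_simp [hf₀ w hw]
    ring
  obtain ⟨a, ha⟩ := isOpen_ball.exists_is_const_of_deriv_eq_zero
    (convex_ball c r).isPreconnected
    (fun w hw ↦ (hprod w hw).differentiableAt.differentiableWithinAt)
    (fun w hw ↦ (hprod w hw).deriv)
  refine ⟨fun w ↦ g w + log a, fun w hw ↦ ⟨(hg w hw).add_const _, ?_⟩⟩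
  have ha₀ : a ≠ 0 := ha w hw ▸ mul_ne_zero (hf₀ w hw) (exp_ne_zero _)
  rw [exp_add, exp_log ha₀, ← ha w hw, exp_neg]
  field_simp

theorem norm_le_norm_two_mul_sub_of_re_le {M : ℝ} {z : ℂ} (hM : 0 ≤ M) (hz : z.re ≤ M) :
    ‖z‖ ≤ ‖2 * M - z‖ := by
  rw [← sq_le_sq₀ (norm_nonneg _) (norm_nonneg _), Complex.sq_norm, Complex.sq_norm,
    normSq_apply, normSq_apply]
  simp only [sub_re, sub_im, mul_re, mul_im, ofReal_re, ofReal_im]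
  norm_num
  nlinarith

theorem norm_deriv_le_of_re_le_of_re_lt {u : ℂ → ℂ} {c : ℂ} {r L : ℝ} (hr : 0 < r)
    (hu : DifferentiableOn ℂ u (ball c r)) (hL : ∀ w ∈ ball c r, (u w).re ≤ L)
    (hc : (u c).re < L) :
    ‖deriv u c‖ ≤ 2 * (L - (u c).re) / r := by
  set M := L - (u c).re
  have hM : 0 < M := sub_pos.mpr hc
  have hre : ∀ w ∈ ball c r, (u w - u c).re ≤ M := fun w hw ↦ by
    simpa [M] using hL w hw
  have hden : ∀ w ∈ ball c r, 2 * (M : ℂ) - (u w - u c) ≠ 0 := fun w hw h ↦ by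
    have := congrArg re h
    norm_num at this
    linarith [hre w hw, sub_re (u w) (u c)]
  set k : ℂ → ℂ := fun w ↦ (u w - u c) / (2 * M - (u w - u c))
  have hk : DifferentiableOn ℂ k (ball c r) :=
    (hu.sub_const _).div ((hu.sub_const _).const_sub _) hden
  have hmaps : MapsTo k (ball c r) (closedBall (k c) 1) := fun w hw ↦ by
    simp only [k, sub_self, zero_div, mem_closedBall_zero_iff, norm_div]
    exact div_le_one_of_le₀ (norm_le_norm_two_mul_sub_of_re_le hM.le (hre w hw)) (norm_nonneg _)
  have hu' : HasDerivAt u (deriv u c) c :=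
    (hu.differentiableAt (ball_mem_nhds c hr)).hasDerivAt
  have hk' : deriv u c = 2 * M * deriv k c := by
    have := (hu'.sub_const (u c)).fun_div ((hu'.sub_const (u c)).const_sub (2 * (M : ℂ)))
      (hden c (mem_ball_self hr))
    rw [this.deriv]
    have : (M : ℂ) ≠ 0 := ofReal_ne_zero.mpr hM.ne'
    field_simp
    ring
  calc ‖deriv u c‖ = 2 * M * ‖deriv k c‖ := by
        rw [hk', norm_mul, norm_mul, norm_real, Real.norm_of_nonneg hM.le, Complex.norm_two]
    _ ≤ 2 * M * (1 / r) := by gcongr; exact norm_deriv_le_div_of_mapsTo_ball hk hmaps hr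
    _ = 2 * M / r := by ring

theorem norm_deriv_le_of_re_le {u : ℂ → ℂ} {c : ℂ} {r L : ℝ} (hr : 0 < r)
    (hu : DifferentiableOn ℂ u (ball c r)) (hL : ∀ w ∈ ball c r, (u w).re ≤ L) :
    ‖deriv u c‖ ≤ 2 * (L - (u c).re) / r := by
  -- Raising `L` keeps the Schwarz transform defined even when `Re u` attains `L` at `c`.
  refine le_of_forall_pos_le_add fun ε hε ↦ ?_
  have hc : (u c).re < L + ε * r / 2 := by
    linarith [hL c (mem_ball_self hr), mul_pos hε hr]
  calc ‖deriv u c‖ ≤ 2 * (L + ε * r / 2 - (u c).re) / r :=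
        norm_deriv_le_of_re_le_of_re_lt hr hu
          (fun w hw ↦ (hL w hw).trans (by linarith [mul_pos hε hr])) hc
    _ = 2 * (L - (u c).re) / r + ε := by field_simp; ring

theorem mul_norm_deriv_le_of_norm_le {f : ℂ → ℂ} {c : ℂ} {r M : ℝ} (hr : 0 < r)
    (hf : DifferentiableOn ℂ f (ball c r)) (hf₀ : ∀ w ∈ ball c r, f w ≠ 0)
    (hM : ∀ w ∈ ball c r, ‖f w‖ ≤ M) :
    r * ‖deriv f c‖ ≤ 2 * ‖f c‖ * Real.log (M / ‖f c‖) := by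
  obtain ⟨h, hh⟩ := exists_log_of_ne_zero_on_ball hf hf₀
  have hc : c ∈ ball c r := mem_ball_self hr
  have hfc : 0 < ‖f c‖ := norm_pos_iff.mpr (hf₀ c hc)
  have hre : ∀ w ∈ ball c r, (h w).re = Real.log ‖f w‖ := fun w hw ↦ by
    rw [← (hh w hw).2, norm_exp, Real.log_exp]
  have hbound := norm_deriv_le_of_re_le hr
    (fun w hw ↦ (hh w hw).1.differentiableAt.differentiableWithinAt) (L := Real.log M)
    fun w hw ↦ hre w hw ▸ Real.log_le_log (norm_pos_iff.mpr (hf₀ w hw)) (hM w hw)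
  rw [(hh c hc).1.deriv, hre c hc, norm_div, div_le_div_iff₀ hfc hr] at hbound
  rw [Real.log_div (hfc.trans_le (hM c hc)).ne' hfc.ne']
  linarith

end Complex

theorem schwarz_pick_local (f : ℂ → ℂ) (z : ℂ)
    (hf : DifferentiableOn ℂ f (ball (0 : ℂ) 1))
    (hz : z ∈ ball (0 : ℂ) 1)
    (hnz : ∀ w ∈ ball z ((1 - ‖z‖) / 2), f w ≠ 0) :
    (1 - ‖z‖) / 2 * ‖deriv f z‖ ≤
      2 * ‖f z‖ *
        Real.log (sSup ((fun w => ‖f w‖) '' ball z ((1 - ‖z‖) / 2))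
          / ‖f z‖) := by
  have hz₁ : ‖z‖ < 1 := mem_ball_zero_iff.mp hz
  have hr : 0 < (1 - ‖z‖) / 2 := by linarith
  have hsub : closedBall z ((1 - ‖z‖) / 2) ⊆ ball (0 : ℂ) 1 :=
    closedBall_subset_ball' (by rw [dist_zero_right]; linarith)
  have hbdd : BddAbove ((fun w => ‖f w‖) '' ball z ((1 - ‖z‖) / 2)) :=
    ((isCompact_closedBall z _).image_of_continuousOn
      (hf.mono hsub).continuousOn.norm).bddAbove.mono (image_mono ball_subset_closedBall)
  exact Complex.mul_norm_deriv_le_of_norm_le hr (hf.mono (ball_subset_closedBall.trans hsub)) hnz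
    fun w hw ↦ le_csSup hbdd (mem_image_of_mem _ hw)
end

section
/- Let ω : (0,1] → (0,∞) be moderate and f holomorphic on the open unit disk D. Suppose there is C₃ > 0 such that for every z ∈ D: if f has a zero in B_z then M_f(z) ≤ C₃ ω(d_z), and if f has no zero in B_z then |f(z)| log(M_f(z)/|f(z)|) ≤ C₃ ω(d_z). Then there exists C > 0 with |f'(z)| ≤ C ω(d_z)/d_z for all z ∈ D. -/
/-!
Near each `z` work on the disc `B_z` of radius `d_z / 2`, on which `|f| ≤ M_f(z)`.
If `f` has a zero in `B_z`, the Schwarz lemma gives `|f'(z)| ≤ 4 M_f(z) / d_z`.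
Otherwise `f = f(z) e^g` on `B_z` with `g(z) = 0`, and `log (M_f(z) / |f(z)|) - g` has nonnegative
real part; the Schwarz lemma applied to its Cayley transform gives
`|f'(z)| ≤ 4 |f(z)| log (M_f(z) / |f(z)|) / d_z`. In both cases the hypothesis bounds the right
side by `4 C₃ ω(d_z) / d_z`.
-/

open Set Metric ComplexConjugate

theorem norm_le_sSup_image_norm_ball {E F : Type*} [PseudoMetricSpace E] [ProperSpace E]
    [SeminormedAddGroup F] {f : E → F} {c w : E} {r : ℝ}
    (hf : ContinuousOn f (closedBall c r)) (hw : w ∈ ball c r) :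
    ‖f w‖ ≤ sSup ((fun w => ‖f w‖) '' ball c r) :=
  le_csSup (((isCompact_closedBall c r).image_of_continuousOn hf.norm).bddAbove.mono
    (image_mono ball_subset_closedBall)) (mem_image_of_mem _ hw)

namespace Complex

theorem norm_sub_le_norm_add_conj {z a : ℂ} (hz : 0 ≤ z.re) (ha : 0 ≤ a.re) :
    ‖z - a‖ ≤ ‖z + conj a‖ := by
  rw [← sq_le_sq₀ (norm_nonneg _) (norm_nonneg _), Complex.sq_norm, Complex.sq_norm,
    normSq_apply, normSq_apply]
  simp only [sub_re, sub_im, add_re, add_im, conj_re, conj_im]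
  nlinarith [mul_nonneg hz ha]

variable {f h : ℂ → ℂ} {c : ℂ} {R M : ℝ}

theorem exists_eq_mul_exp_of_ne_zero_on_ball (hf : DifferentiableOn ℂ f (ball c R))
    (hne : ∀ w ∈ ball c R, f w ≠ 0) :
    ∃ g : ℂ → ℂ, g c = 0 ∧ (∀ w ∈ ball c R, HasDerivAt g (deriv f w / f w) w) ∧
      ∀ w ∈ ball c R, f w = f c * exp (g w) := by
  have hlogDeriv : DifferentiableOn ℂ (fun w => deriv f w / f w) (ball c R) :=
    (hf.analyticOnNhd isOpen_ball).deriv.differentiableOn.div hf hne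
  obtain ⟨g, hgc, hg⟩ := hlogDeriv.isExactOn_ball.with_val_at c 0
  refine ⟨g, hgc, hg, fun w hw => ?_⟩
  have hu : ∀ w ∈ ball c R, HasDerivAt (fun w => f w * exp (-g w)) 0 w := by
    intro w hw
    have hfw := (hf.differentiableAt (isOpen_ball.mem_nhds hw)).hasDerivAt
    refine (hfw.mul (hg w hw).neg.cexp).congr_deriv ?_
    field_simp [hne w hw]
    ring
  have hconst := isOpen_ball.is_const_of_deriv_eq_zero (convex_ball c R).isPreconnected
    (fun w hw => (hu w hw).differentiableAt.differentiableWithinAt)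
    (fun w hw => (hu w hw).deriv) hw (mem_ball_self (pos_of_mem_ball hw))
  simp only [hgc, neg_zero, exp_zero, mul_one] at hconst
  rw [← hconst, mul_assoc, ← exp_add, neg_add_cancel, exp_zero, mul_one]

theorem norm_deriv_le_two_mul_div_of_norm_le (hf : DifferentiableOn ℂ f (ball c R))
    (hR : 0 < R) (hM : ∀ w ∈ ball c R, ‖f w‖ ≤ M) : ‖deriv f c‖ ≤ 2 * M / R := by
  refine norm_deriv_le_div_of_mapsTo_ball hf (fun w hw => ?_) hR
  rw [mem_closedBall, dist_eq_norm, two_mul]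
  exact (norm_sub_le _ _).trans (add_le_add (hM w hw) (hM c (mem_ball_self hR)))

/-- The Cayley transform `w ↦ (h w - h c) / (h w + conj (h c))` maps the disc into the unit disc
and `c` to `0`, so the Schwarz lemma applies to it. -/
theorem norm_deriv_le_two_mul_re_div_of_re_nonneg (hh : DifferentiableOn ℂ h (ball c R))
    (hR : 0 < R) (hre : ∀ w ∈ ball c R, 0 ≤ (h w).re) (hc : 0 < (h c).re) :
    ‖deriv h c‖ ≤ 2 * (h c).re / R := by
  set a := h c with ha
  have hden : ∀ w ∈ ball c R, h w + conj a ≠ 0 := fun w hw h0 => by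
    have := congrArg re h0
    simp only [add_re, conj_re, zero_re] at this
    linarith [hre w hw]
  set G : ℂ → ℂ := fun w => (h w - a) / (h w + conj a) with hG
  have hGc : G c = 0 := by simp [hG, ← ha]
  have hGdiff : DifferentiableOn ℂ G (ball c R) := (hh.sub_const a).div (hh.add_const _) hden
  have hmaps : MapsTo G (ball c R) (closedBall (G c) 1) := by
    intro w hw
    rw [hGc, mem_closedBall, dist_zero_right, norm_div, div_le_one (norm_pos_iff.2 (hden w hw))]
    exact norm_sub_le_norm_add_conj (hre w hw) hc.le
  have hcR := mem_ball_self hR (x := c)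
  have hGderiv : HasDerivAt G (deriv h c / (a + conj a)) c := by
    have hhc := (hh.differentiableAt (isOpen_ball.mem_nhds hcR)).hasDerivAt
    refine ((hhc.sub_const a).div (hhc.add_const (conj a)) (hden c hcR)).congr_deriv ?_
    have : a + conj a ≠ 0 := hden c hcR
    rw [← ha]
    field_simp
    ring
  have hSchwarz := norm_deriv_le_div_of_mapsTo_ball hGdiff hmaps hR
  rw [hGderiv.deriv, norm_div, add_conj, norm_real, Real.norm_of_nonneg (by positivity),
    div_le_div_iff₀ (by positivity) hR] at hSchwarz
  rw [le_div_iff₀ hR]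
  linarith

theorem norm_deriv_le_of_ne_zero_of_norm_le (hf : DifferentiableOn ℂ f (ball c R)) (hR : 0 < R)
    (hne : ∀ w ∈ ball c R, f w ≠ 0) (hM : ∀ w ∈ ball c R, ‖f w‖ ≤ M) :
    ‖deriv f c‖ ≤ 2 * (‖f c‖ * Real.log (M / ‖f c‖)) / R := by
  have hcR : c ∈ ball c R := mem_ball_self hR
  have hfc : 0 < ‖f c‖ := norm_pos_iff.2 (hne c hcR)
  rcases (hM c hcR).lt_or_eq with hlt | heq
  · obtain ⟨g, hgc, hg, hfg⟩ := exists_eq_mul_exp_of_ne_zero_on_ball hf hne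
    have hgre : ∀ w ∈ ball c R, (g w).re ≤ Real.log (M / ‖f c‖) := fun w hw => by
      rw [Real.le_log_iff_exp_le (div_pos (hfc.trans hlt) hfc), le_div_iff₀' hfc]
      simpa [hfg w hw, norm_exp] using hM w hw
    set L := Real.log (M / ‖f c‖)
    have hL : 0 < L := Real.log_pos ((one_lt_div hfc).2 hlt)
    have hderiv : HasDerivAt (fun w => (L : ℂ) - g w) (-(deriv f c / f c)) c :=
      (hg c hcR).const_sub _
    have key := norm_deriv_le_two_mul_re_div_of_re_nonneg (h := fun w => (L : ℂ) - g w)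
      (fun w hw => ((hg w hw).const_sub _).differentiableAt.differentiableWithinAt) hR
      (fun w hw => by simpa using hgre w hw) (by simpa [hgc] using hL)
    rw [hderiv.deriv, norm_neg, norm_div] at key
    simp only [ofReal_re, hgc, sub_zero] at key
    rw [div_le_iff₀ hfc] at key
    calc ‖deriv f c‖ ≤ 2 * L / R * ‖f c‖ := key
      _ = 2 * (‖f c‖ * L) / R := by ring
  · have hmax : IsLocalMax (norm ∘ f) c :=
      Filter.eventually_of_mem (isOpen_ball.mem_nhds hcR) fun w hw => (hM w hw).trans heq.ge
    have hflat := eventually_eq_of_isLocalMax_norm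
      (Filter.eventually_of_mem (isOpen_ball.mem_nhds hcR)
        fun w hw => hf.differentiableAt (isOpen_ball.mem_nhds hw)) hmax
    rw [Filter.EventuallyEq.deriv_eq (f := fun _ => f c) hflat, deriv_const, ← heq,
      div_self hfc.ne']
    simp

end Complex

theorem modulus_condition_implies_bloch_type_general (ω : ℝ → ℝ) (f : ℂ → ℂ) (C₃ : ℝ)
    (hf : DifferentiableOn ℂ f (ball (0 : ℂ) 1))
    (hC₃ : 0 < C₃)
    (hzero : ∀ z ∈ ball (0 : ℂ) 1, (∃ w ∈ ball z ((1 - ‖z‖) / 2), f w = 0) →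
      sSup ((fun w => ‖f w‖) '' ball z ((1 - ‖z‖) / 2)) ≤
        C₃ * ω (1 - ‖z‖))
    (hnozero : ∀ z ∈ ball (0 : ℂ) 1, (∀ w ∈ ball z ((1 - ‖z‖) / 2), f w ≠ 0) →
      ‖f z‖ *
        Real.log (sSup ((fun w => ‖f w‖) '' ball z ((1 - ‖z‖) / 2))
          / ‖f z‖) ≤ C₃ * ω (1 - ‖z‖)) :
    ∃ C > 0, ∀ z ∈ ball (0 : ℂ) 1,
      ‖deriv f z‖ ≤ C * ω (1 - ‖z‖) / (1 - ‖z‖) := by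
  refine ⟨4 * C₃, by positivity, fun z hz => ?_⟩
  set d := 1 - ‖z‖
  have hd : 0 < d := sub_pos.2 (mem_ball_zero_iff.1 hz)
  have hB : closedBall z (d / 2) ⊆ ball 0 1 :=
    closedBall_subset_ball' (by rw [dist_zero_right]; linarith)
  have hfB : DifferentiableOn ℂ f (ball z (d / 2)) := hf.mono (ball_subset_closedBall.trans hB)
  have hM := fun w (hw : w ∈ ball z (d / 2)) =>
    norm_le_sSup_image_norm_ball (hf.continuousOn.mono hB) hw
  obtain ⟨K, hK, hderiv⟩ : ∃ K ≤ C₃ * ω d, ‖deriv f z‖ ≤ 2 * K / (d / 2) := by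
    by_cases hzeroB : ∃ w ∈ ball z (d / 2), f w = 0
    · exact ⟨_, hzero z hz hzeroB,
        Complex.norm_deriv_le_two_mul_div_of_norm_le hfB (half_pos hd) hM⟩
    · push Not at hzeroB
      exact ⟨_, hnozero z hz hzeroB,
        Complex.norm_deriv_le_of_ne_zero_of_norm_le hfB (half_pos hd) hzeroB hM⟩
  calc ‖deriv f z‖ ≤ 2 * K / (d / 2) := hderiv
    _ ≤ 2 * (C₃ * ω d) / (d / 2) := by gcongr
    _ = 4 * C₃ * ω d / d := by field_simp; ring

theorem modulus_condition_implies_bloch_type (ω : ℝ → ℝ) (f : ℂ → ℂ) (C₀ C₃ : ℝ)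
    (hf : DifferentiableOn ℂ f (ball (0 : ℂ) 1))
    (hpos : ∀ t ∈ Ioc (0 : ℝ) 1, 0 < ω t) (hC₀ : 0 < C₀)
    (hmod : ∀ a ∈ Ioc (0 : ℝ) 1, ∀ b ∈ Ioc (0 : ℝ) 1,
      1 / 2 ≤ a / b → a / b ≤ 2 → 1 / C₀ ≤ ω a / ω b ∧ ω a / ω b ≤ C₀)
    (hC₃ : 0 < C₃)
    (hzero : ∀ z ∈ ball (0 : ℂ) 1, (∃ w ∈ ball z ((1 - ‖z‖) / 2), f w = 0) →
      sSup ((fun w => ‖f w‖) '' ball z ((1 - ‖z‖) / 2)) ≤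
        C₃ * ω (1 - ‖z‖))
    (hnozero : ∀ z ∈ ball (0 : ℂ) 1, (∀ w ∈ ball z ((1 - ‖z‖) / 2), f w ≠ 0) →
      ‖f z‖ *
        Real.log (sSup ((fun w => ‖f w‖) '' ball z ((1 - ‖z‖) / 2))
          / ‖f z‖) ≤ C₃ * ω (1 - ‖z‖)) :
    ∃ C > 0, ∀ z ∈ ball (0 : ℂ) 1,
      ‖deriv f z‖ ≤ C * ω (1 - ‖z‖) / (1 - ‖z‖) :=
  modulus_condition_implies_bloch_type_general ω f C₃ hf hC₃ hzero hnozero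
end

section
/- Let ω : (0,1] → (0,∞) be moderate and f holomorphic on the open unit disk D. Then f satisfies |f'(z)| ≤ C ω(d_z)/d_z on D for some constant C > 0 if and only if there exists C₁ > 0 such that |f(z₁)| - |f(z₂)| ≤ C₁ ω(d_z) for every z ∈ D and all z₁, z₂ ∈ B_z. -/
/-!
Forward direction: on `B_z` the moderate weight gives `|f'| ≲ ω(d_z)/d_z`, and `B_z` has diameter
`d_z`, so by the mean value inequality `|f(z₁)| - |f(z₂)| ≤ |f(z₁) - f(z₂)| ≲ ω(d_z)`.

Converse: after a rotation making `f z` a nonnegative real, the oscillation bound says that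
`Re (f w - f z) ≤ C₁ ω(d_z)` on `B_z`. The Borel–Carathéodory estimate for the derivative
(Schwarz's lemma composed with a Möbius map of the half-plane into the disc) then yields
`|f'(z)| ≤ 4 C₁ ω(d_z)/d_z`.
-/

open Set Metric

namespace Complex

lemma norm_le_norm_two_mul_sub_of_re_le_s12 {M : ℝ} {u : ℂ} (hM : 0 ≤ M) (hu : u.re ≤ M) :
    ‖u‖ ≤ ‖2 * M - u‖ := by
  rw [← sq_le_sq₀ (norm_nonneg _) (norm_nonneg _), Complex.sq_norm, Complex.sq_norm, normSq_apply,
    normSq_apply]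
  simp only [sub_re, sub_im, mul_re, mul_im, ofReal_re, ofReal_im, re_ofNat, im_ofNat]
  nlinarith

theorem norm_deriv_le_of_re_sub_le {h : ℂ → ℂ} {c : ℂ} {R M : ℝ}
    (hd : DifferentiableOn ℂ h (ball c R)) (hre : ∀ w ∈ ball c R, (h w - h c).re ≤ M)
    (hR : 0 < R) (hM : 0 < M) : ‖deriv h c‖ ≤ 2 * M / R := by
  set u : ℂ → ℂ := fun w => h w - h c
  have hden : ∀ w ∈ ball c R, 2 * (M : ℂ) - u w ≠ 0 := by
    intro w hw h0
    have := congrArg re h0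
    simp only [sub_re, mul_re, ofReal_re, ofReal_im, re_ofNat, im_ofNat, zero_re] at this
    linarith [hre w hw]
  -- `v ↦ v / (2M - v)` maps the half-plane `Re v ≤ M` into the closed unit disc
  set g : ℂ → ℂ := fun w => u w / (2 * M - u w)
  have hgc : g c = 0 := by simp [g, u]
  have hmaps : MapsTo g (ball c R) (closedBall (g c) 1) := by
    intro w hw
    rw [hgc, mem_closedBall_zero_iff, norm_div]
    exact div_le_one_of_le₀ (norm_le_norm_two_mul_sub_of_re_le_s12 hM.le (hre w hw)) (norm_nonneg _)
  have hgd : DifferentiableOn ℂ g (ball c R) :=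
    (hd.sub_const _).div ((hd.sub_const _).const_sub _) hden
  have hderiv : deriv g c = deriv h c / (2 * M) := by
    have hu : HasDerivAt u (deriv h c) c :=
      (hd.differentiableAt (ball_mem_nhds c hR)).hasDerivAt.sub_const _
    have hg : HasDerivAt g
        ((deriv h c * (2 * M - u c) - u c * -deriv h c) / (2 * M - u c) ^ 2) c :=
      hu.div (hu.const_sub _) (hden c (mem_ball_self hR))
    have hM' : (M : ℂ) ≠ 0 := by exact_mod_cast hM.ne'
    rw [hg.deriv]
    simp only [u, sub_self, zero_mul, sub_zero]
    field_simp
  have hschwarz := norm_deriv_le_div_of_mapsTo_ball hgd hmaps hR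
  rw [hderiv, norm_div, norm_mul, Complex.norm_two, norm_real, Real.norm_of_nonneg hM.le,
    div_le_div_iff₀ (by positivity) hR] at hschwarz
  rw [le_div_iff₀ hR]
  linarith

theorem norm_deriv_le_of_norm_le_norm_add {f : ℂ → ℂ} {c : ℂ} {R K : ℝ}
    (hd : DifferentiableOn ℂ f (ball c R)) (hb : ∀ w ∈ ball c R, ‖f w‖ ≤ ‖f c‖ + K)
    (hR : 0 < R) (hK : 0 < K) : ‖deriv f c‖ ≤ 2 * K / R := by
  set l : ℂ := exp (-(f c).arg * I)
  have hl : ‖l‖ = 1 := by simpa [l] using norm_exp_ofReal_mul_I (-(f c).arg)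
  have hlc : l * f c = ‖f c‖ := by
    conv_lhs => rw [← norm_mul_exp_arg_mul_I (f c)]
    rw [mul_left_comm, ← exp_add]
    simp
  have hre : ∀ w ∈ ball c R, (l * f w - l * f c).re ≤ K := fun w hw => by
    have := re_le_norm (l * f w)
    rw [norm_mul, hl, one_mul] at this
    rw [sub_re, hlc, ofReal_re]
    linarith [hb w hw]
  have hderiv : deriv (fun w => l * f w) c = l * deriv f c :=
    deriv_const_mul _ (hd.differentiableAt (ball_mem_nhds c hR))
  have := norm_deriv_le_of_re_sub_le (hd.const_mul l) hre hR hK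
  rwa [hderiv, norm_mul, hl, one_mul] at this

end Complex

lemma Metric.ball_half_one_sub_norm_subset_ball_one {E : Type*} [SeminormedAddCommGroup E] {z : E}
    (hz : ‖z‖ ≤ 1) : ball z ((1 - ‖z‖) / 2) ⊆ ball 0 1 :=
  ball_subset_ball' (by rw [dist_zero_right]; linarith)

section UnitDisc

variable {ω : ℝ → ℝ} {f : ℂ → ℂ} {z : ℂ}

theorem norm_deriv_le_of_mem_ball_half {C₀ C : ℝ} {w : ℂ}
    (hpos : ∀ t ∈ Ioc (0 : ℝ) 1, 0 < ω t)
    (hmod : ∀ a ∈ Ioc (0 : ℝ) 1, ∀ b ∈ Ioc (0 : ℝ) 1, 1 / 2 ≤ a / b → a / b ≤ 2 → ω a / ω b ≤ C₀)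
    (hC : 0 ≤ C) (hbloch : ∀ z ∈ ball (0 : ℂ) 1, ‖deriv f z‖ ≤ C * ω (1 - ‖z‖) / (1 - ‖z‖))
    (hz : z ∈ ball (0 : ℂ) 1) (hw : w ∈ ball z ((1 - ‖z‖) / 2)) :
    ‖deriv f w‖ ≤ 2 * C * C₀ * ω (1 - ‖z‖) / (1 - ‖z‖) := by
  have hz' := mem_ball_zero_iff.mp hz
  have hw₁ := ball_half_one_sub_norm_subset_ball_one hz'.le hw
  have hw' := mem_ball_zero_iff.mp hw₁
  have hd : 1 - ‖z‖ ∈ Ioc (0 : ℝ) 1 := ⟨by linarith, by linarith [norm_nonneg z]⟩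
  have hdw : 1 - ‖w‖ ∈ Ioc (0 : ℝ) 1 := ⟨by linarith, by linarith [norm_nonneg w]⟩
  obtain ⟨hlow, hhigh⟩ := abs_lt.mp <| (abs_norm_sub_norm_le w z).trans_lt (mem_ball_iff_norm.mp hw)
  have hω : ω (1 - ‖w‖) ≤ C₀ * ω (1 - ‖z‖) := by
    refine (div_le_iff₀ (hpos _ hd)).mp (hmod _ hdw _ hd ?_ ?_)
    · rw [le_div_iff₀ hd.1]; linarith
    · rw [div_le_iff₀ hd.1]; linarith
  calc ‖deriv f w‖ ≤ C * ω (1 - ‖w‖) / (1 - ‖w‖) := hbloch w hw₁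
    _ ≤ C * (C₀ * ω (1 - ‖z‖)) / ((1 - ‖z‖) / 2) := by
      gcongr
      · exact mul_nonneg hC (hω.trans' (hpos _ hdw).le)
      · linarith
    _ = 2 * C * C₀ * ω (1 - ‖z‖) / (1 - ‖z‖) := by field_simp

theorem norm_sub_le_of_norm_deriv_le {C₀ C : ℝ}
    (hf : DifferentiableOn ℂ f (ball (0 : ℂ) 1)) (hpos : ∀ t ∈ Ioc (0 : ℝ) 1, 0 < ω t)
    (hmod : ∀ a ∈ Ioc (0 : ℝ) 1, ∀ b ∈ Ioc (0 : ℝ) 1, 1 / 2 ≤ a / b → a / b ≤ 2 → ω a / ω b ≤ C₀)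
    (hC : 0 ≤ C) (hbloch : ∀ z ∈ ball (0 : ℂ) 1, ‖deriv f z‖ ≤ C * ω (1 - ‖z‖) / (1 - ‖z‖))
    (hz : z ∈ ball (0 : ℂ) 1) {z₁ z₂ : ℂ} (hz₁ : z₁ ∈ ball z ((1 - ‖z‖) / 2))
    (hz₂ : z₂ ∈ ball z ((1 - ‖z‖) / 2)) :
    ‖f z₁ - f z₂‖ ≤ 2 * C * C₀ * ω (1 - ‖z‖) := by
  have hz' := mem_ball_zero_iff.mp hz
  have hsub := ball_half_one_sub_norm_subset_ball_one hz'.le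
  have hd : 0 < 1 - ‖z‖ := by linarith
  have hderiv := fun w (hw : w ∈ ball z ((1 - ‖z‖) / 2)) =>
    norm_deriv_le_of_mem_ball_half hpos hmod hC hbloch hz hw
  have hlip := (convex_ball z _).norm_image_sub_le_of_norm_deriv_le
    (fun w hw => hf.differentiableAt (isOpen_ball.mem_nhds (hsub hw))) hderiv hz₂ hz₁
  have hbound_nonneg : 0 ≤ 2 * C * C₀ * ω (1 - ‖z‖) / (1 - ‖z‖) :=
    (norm_nonneg _).trans (hderiv z (mem_ball_self (by linarith)))
  have hdist : ‖z₁ - z₂‖ ≤ 1 - ‖z‖ := by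
    rw [← dist_eq_norm]
    linarith [dist_triangle_right z₁ z₂ z, mem_ball.mp hz₁, mem_ball.mp hz₂]
  calc ‖f z₁ - f z₂‖ ≤ 2 * C * C₀ * ω (1 - ‖z‖) / (1 - ‖z‖) * (1 - ‖z‖) :=
        hlip.trans (mul_le_mul_of_nonneg_left hdist hbound_nonneg)
    _ = 2 * C * C₀ * ω (1 - ‖z‖) := by field_simp

theorem norm_deriv_le_of_norm_sub_norm_le {C₁ : ℝ} (hf : DifferentiableOn ℂ f (ball (0 : ℂ) 1))
    (hpos : ∀ t ∈ Ioc (0 : ℝ) 1, 0 < ω t) (hC₁ : 0 < C₁)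
    (hosc : ∀ z ∈ ball (0 : ℂ) 1, ∀ z₁ ∈ ball z ((1 - ‖z‖) / 2), ∀ z₂ ∈ ball z ((1 - ‖z‖) / 2),
      ‖f z₁‖ - ‖f z₂‖ ≤ C₁ * ω (1 - ‖z‖))
    (hz : z ∈ ball (0 : ℂ) 1) : ‖deriv f z‖ ≤ 4 * C₁ * ω (1 - ‖z‖) / (1 - ‖z‖) := by
  have hz' := mem_ball_zero_iff.mp hz
  have hd : 0 < 1 - ‖z‖ := by linarith
  have hK : 0 < C₁ * ω (1 - ‖z‖) := mul_pos hC₁ (hpos _ ⟨hd, by linarith [norm_nonneg z]⟩)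
  calc ‖deriv f z‖ ≤ 2 * (C₁ * ω (1 - ‖z‖)) / ((1 - ‖z‖) / 2) :=
        Complex.norm_deriv_le_of_norm_le_norm_add
          (hf.mono (ball_half_one_sub_norm_subset_ball_one hz'.le))
          (fun w hw => by linarith [hosc z hz w hw z (mem_ball_self (by linarith))])
          (by linarith) hK
    _ = 4 * C₁ * ω (1 - ‖z‖) / (1 - ‖z‖) := by field_simp; ring

end UnitDisc

theorem bloch_type_iff_modulus_oscillation (ω : ℝ → ℝ) (f : ℂ → ℂ) (C₀ : ℝ)
    (hf : DifferentiableOn ℂ f (ball (0 : ℂ) 1))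
    (hpos : ∀ t ∈ Ioc (0 : ℝ) 1, 0 < ω t) (hC₀ : 0 < C₀)
    (hmod : ∀ a ∈ Ioc (0 : ℝ) 1, ∀ b ∈ Ioc (0 : ℝ) 1,
      1 / 2 ≤ a / b → a / b ≤ 2 → 1 / C₀ ≤ ω a / ω b ∧ ω a / ω b ≤ C₀) :
    (∃ C > 0, ∀ z ∈ ball (0 : ℂ) 1,
        ‖deriv f z‖ ≤ C * ω (1 - ‖z‖) / (1 - ‖z‖)) ↔
    (∃ C₁ > 0, ∀ z ∈ ball (0 : ℂ) 1,
        ∀ z₁ ∈ ball z ((1 - ‖z‖) / 2), ∀ z₂ ∈ ball z ((1 - ‖z‖) / 2),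
          ‖f z₁‖ - ‖f z₂‖ ≤ C₁ * ω (1 - ‖z‖)) := by
  constructor
  · rintro ⟨C, hC, hbloch⟩
    refine ⟨2 * C * C₀, by positivity, fun z hz z₁ hz₁ z₂ hz₂ => ?_⟩
    exact (norm_sub_norm_le _ _).trans <| norm_sub_le_of_norm_deriv_le hf hpos
      (fun a ha b hb h₁ h₂ => (hmod a ha b hb h₁ h₂).2) hC.le hbloch hz hz₁ hz₂
  · rintro ⟨C₁, hC₁, hosc⟩
    exact ⟨4 * C₁, by positivity, fun z hz =>
      norm_deriv_le_of_norm_sub_norm_le hf hpos hC₁ hosc hz⟩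
end
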